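/- arXiv:2409.11789 — 5 statements merged into one kernel-verified Lean document; each statement's English description precedes it below -/
import Mathlib

section
/- Let X be a real I×J matrix, and let D_r and D_c be diagonal matrices with positive diagonal entries. Suppose X = U Δ Vᵀ with Δ diagonal and Uᵀ D_r^{-1} U = Vᵀ D_c^{-1} V = I. Then the column factor scores G = D_c^{-1} V Δ satisfy trace(Gᵀ D_c G) = trace(D_r^{-1/2} X D_c^{-1} Xᵀ D_r^{-1/2}); i.e., the inertia of the column factor scores equals the total inertia of X. -/
open Matrix

/-- for a GSVD `X = U Δ Vᵀ` with metrics `D_r^{-1}`, `D_c^{-1}`, the inertia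
of the column factor scores `G = D_c^{-1} V Δ`, namely `trace(Gᵀ D_c G)`, equals the total
inertia `trace(D_r^{-1/2} X D_c^{-1} Xᵀ D_r^{-1/2})`. -/
theorem colFactorScores_inertia {I J L : ℕ}
    (X : Matrix (Fin I) (Fin J) ℝ)
    (r : Fin I → ℝ) (c : Fin J → ℝ)
    (hrpos : ∀ i, 0 < r i) (hcpos : ∀ j, 0 < c j)
    (U : Matrix (Fin I) (Fin L) ℝ) (V : Matrix (Fin J) (Fin L) ℝ)
    (Δ : Matrix (Fin L) (Fin L) ℝ) (hΔ : Δ.IsDiag)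
    (hX : X = U * Δ * Vᵀ)
    (hU : Uᵀ * (diagonal r)⁻¹ * U = 1) (hV : Vᵀ * (diagonal c)⁻¹ * V = 1)
    (G : Matrix (Fin J) (Fin L) ℝ) (hG : G = (diagonal c)⁻¹ * V * Δ) :
    trace (Gᵀ * diagonal c * G)
      = trace (diagonal (fun i => (Real.sqrt (r i))⁻¹) * X * (diagonal c)⁻¹ * Xᵀ *
          diagonal (fun i => (Real.sqrt (r i))⁻¹)) := by
  have hcne : ∀ j, c j ≠ 0 := fun j => (hcpos j).ne'
  set s : Matrix (Fin I) (Fin I) ℝ := diagonal (fun i => (Real.sqrt (r i))⁻¹) with hs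
  have hr : (diagonal r)⁻¹ = diagonal (fun i => (r i)⁻¹) := by
    apply Matrix.inv_eq_right_inv
    rw [diagonal_mul_diagonal]
    have : (fun i => r i * (r i)⁻¹) = fun _ : Fin I => (1 : ℝ) :=
      funext fun i => mul_inv_cancel₀ (hrpos i).ne'
    rw [this, diagonal_one]
  have hss : s * s = (diagonal r)⁻¹ := by
    rw [hs, diagonal_mul_diagonal, hr]
    have : (fun i => (Real.sqrt (r i))⁻¹ * (Real.sqrt (r i))⁻¹) = fun i => (r i)⁻¹ := by
      funext i
      rw [← mul_inv, Real.mul_self_sqrt (hrpos i).le]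
    rw [this]
  have hdc : diagonal c * (diagonal c)⁻¹ = 1 := by
    have h1 : diagonal c * diagonal (fun j => (c j)⁻¹) = 1 := by
      rw [diagonal_mul_diagonal]
      have : (fun j => c j * (c j)⁻¹) = fun _ : Fin J => (1 : ℝ) :=
        funext fun j => mul_inv_cancel₀ (hcne j)
      rw [this, diagonal_one]
    rw [Matrix.inv_eq_right_inv h1]
    exact h1
  -- LHS equals trace (Δᵀ * Δ)
  have hLHS : Gᵀ * diagonal c * G = Δᵀ * Δ := by
    subst hG
    simp only [transpose_mul, transpose_nonsing_inv, diagonal_transpose, Matrix.mul_assoc]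
    rw [← Matrix.mul_assoc (diagonal c) ((diagonal c)⁻¹) (V * Δ), hdc, Matrix.one_mul,
      ← Matrix.mul_assoc Vᵀ ((diagonal c)⁻¹) (V * Δ),
      ← Matrix.mul_assoc (Vᵀ * (diagonal c)⁻¹) V Δ, hV, Matrix.one_mul]
  have hXX : X * (diagonal c)⁻¹ * Xᵀ = U * (Δ * Δᵀ) * Uᵀ := by
    subst hX
    simp only [transpose_mul, transpose_transpose, Matrix.mul_assoc]
    rw [← Matrix.mul_assoc Vᵀ ((diagonal c)⁻¹) (V * (Δᵀ * Uᵀ)),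
      ← Matrix.mul_assoc (Vᵀ * (diagonal c)⁻¹) V (Δᵀ * Uᵀ), hV, Matrix.one_mul]
  have hRHS : trace (s * X * (diagonal c)⁻¹ * Xᵀ * s) = trace (Δ * Δᵀ) := by
    calc trace (s * X * (diagonal c)⁻¹ * Xᵀ * s)
        = trace (s * (s * X * (diagonal c)⁻¹ * Xᵀ)) :=
          trace_mul_comm (s * X * (diagonal c)⁻¹ * Xᵀ) s
      _ = trace ((s * s) * (X * (diagonal c)⁻¹ * Xᵀ)) := by
          simp only [Matrix.mul_assoc]
      _ = trace ((U * (Δ * Δᵀ)) * (Uᵀ * (diagonal r)⁻¹)) := by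
          rw [hss, hXX]
          simp only [Matrix.mul_assoc]
          rw [trace_mul_comm]
          simp only [Matrix.mul_assoc]
      _ = trace ((Uᵀ * (diagonal r)⁻¹ * U) * (Δ * Δᵀ)) := by
          rw [trace_mul_comm]
          simp only [Matrix.mul_assoc]
      _ = trace (Δ * Δᵀ) := by rw [hU, Matrix.one_mul]
  rw [hLHS, hRHS, trace_mul_comm]
end

section
/- Let X be a real I×J matrix with 1ᵀ X = 0 and X 1 = 0 (all column sums and row sums zero), and let D_r, D_c be diagonal matrices with positive diagonal entries. Suppose X = U Δ Vᵀ with Δ diagonal and invertible and Uᵀ D_r^{-1} U = Vᵀ D_c^{-1} V = I. Then 1ᵀ U = 0 and 1ᵀ V = 0; i.e., every column of U sums to zero and every column of V sums to zero. -/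
open Matrix

/-- if `X` has all row sums and column sums equal to zero and
`X = U Δ Vᵀ` is a GSVD with `Δ` diagonal invertible, then every column of `U`
and every column of `V` sums to zero (`1ᵀU = 0`, `1ᵀV = 0`). -/
theorem singular_vectors_centered {I J L : ℕ}
    (X : Matrix (Fin I) (Fin J) ℝ)
    (hrow : X *ᵥ (fun _ => (1 : ℝ)) = 0) (hcol : (fun _ => (1 : ℝ)) ᵥ* X = 0)
    (r : Fin I → ℝ) (c : Fin J → ℝ)
    (hrpos : ∀ i, 0 < r i) (hcpos : ∀ j, 0 < c j)
    (U : Matrix (Fin I) (Fin L) ℝ) (V : Matrix (Fin J) (Fin L) ℝ)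
    (Δ : Matrix (Fin L) (Fin L) ℝ) (hΔ : Δ.IsDiag) (hΔinv : IsUnit Δ.det)
    (hX : X = U * Δ * Vᵀ)
    (hU : Uᵀ * (diagonal r)⁻¹ * U = 1) (hV : Vᵀ * (diagonal c)⁻¹ * V = 1) :
    (fun _ => (1 : ℝ)) ᵥ* U = 0 ∧ (fun _ => (1 : ℝ)) ᵥ* V = 0 := by
  subst hX
  constructor
  · have h1 : (fun _ => (1 : ℝ)) ᵥ* (U * Δ * Vᵀ * ((diagonal c)⁻¹ * V)) = 0 := by
      rw [← Matrix.vecMul_vecMul, hcol, Matrix.zero_vecMul]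
    have h2 : U * Δ * Vᵀ * ((diagonal c)⁻¹ * V) = U * Δ := by
      calc U * Δ * Vᵀ * ((diagonal c)⁻¹ * V)
          = U * Δ * (Vᵀ * (diagonal c)⁻¹ * V) := by
            simp only [Matrix.mul_assoc]
        _ = U * Δ := by rw [hV, Matrix.mul_one]
    rw [h2, ← Matrix.vecMul_vecMul] at h1
    have := congrArg (fun v => v ᵥ* Δ⁻¹) h1
    simpa [Matrix.vecMul_vecMul, Matrix.mul_nonsing_inv _ hΔinv, Matrix.mul_assoc,
      Matrix.zero_vecMul] using this
  · have h3 : Uᵀ * (diagonal r)⁻¹ * (U * Δ * Vᵀ) = Δ * Vᵀ := by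
      calc Uᵀ * (diagonal r)⁻¹ * (U * Δ * Vᵀ)
          = (Uᵀ * (diagonal r)⁻¹ * U) * Δ * Vᵀ := by
            simp only [Matrix.mul_assoc]
        _ = Δ * Vᵀ := by rw [hU, Matrix.one_mul]
    have h1 : (Δ * Vᵀ) *ᵥ (fun _ => (1 : ℝ)) = 0 := by
      rw [← h3, ← Matrix.mulVec_mulVec, hrow, Matrix.mulVec_zero]
    have h4 : (Δ⁻¹ * (Δ * Vᵀ)) *ᵥ (fun _ => (1 : ℝ)) = 0 := by
      rw [← Matrix.mulVec_mulVec, h1, Matrix.mulVec_zero]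
    rw [← Matrix.mul_assoc, Matrix.nonsing_inv_mul _ hΔinv, Matrix.one_mul] at h4
    rw [← Matrix.mulVec_transpose]
    exact h4
end

section
/- Distributional equivalence: Let Z be a real I×J matrix with all row sums positive and all column sums positive, and suppose two distinct rows i₀ and i₁ of Z are proportional: the i₁-th row equals λ times the i₀-th row for some λ > 0. Let Z' be the (I−1)×J matrix obtained from Z by deleting row i₁ and replacing row i₀ by the sum of rows i₀ and i₁. Write r = Z1, c = Zᵀ1, X = Z − r cᵀ, and r' = Z'1, c' = Z'ᵀ1, X' = Z' − r' c'ᵀ. Then c' = c and X'ᵀ diag(r')^{-1} X' = Xᵀ diag(r)^{-1} X; i.e., merging two proportional rows into their sum leaves the column margins and the weighted column cross-product matrix (hence the column geometry of correspondence analysis) unchanged. -/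
open Matrix

/-- distributional equivalence: merging two proportional rows of `Z`
into their sum leaves the column margins and the weighted column cross-product matrix
`Xᵀ D_r^{-1} X` unchanged. -/
theorem distributional_equivalence {I J : ℕ}
    (Z : Matrix (Fin I) (Fin J) ℝ)
    (r : Fin I → ℝ) (c : Fin J → ℝ)
    (hr : ∀ i, r i = ∑ j, Z i j) (hc : ∀ j, c j = ∑ i, Z i j)
    (hrpos : ∀ i, 0 < r i) (hcpos : ∀ j, 0 < c j)
    (i₀ i₁ : Fin I) (hne : i₀ ≠ i₁)
    (lam : ℝ) (hlam : 0 < lam) (hprop : ∀ j, Z i₁ j = lam * Z i₀ j)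
    (Z' : Matrix {i : Fin I // i ≠ i₁} (Fin J) ℝ)
    (hZ' : ∀ (i : {i : Fin I // i ≠ i₁}) (j : Fin J),
      Z' i j = if (i : Fin I) = i₀ then Z i₀ j + Z i₁ j else Z (i : Fin I) j)
    (r' : {i : Fin I // i ≠ i₁} → ℝ) (c' : Fin J → ℝ)
    (hr' : ∀ i, r' i = ∑ j, Z' i j) (hc' : ∀ j, c' j = ∑ i, Z' i j)
    (X : Matrix (Fin I) (Fin J) ℝ) (hX : X = Z - vecMulVec r c)
    (X' : Matrix {i : Fin I // i ≠ i₁} (Fin J) ℝ) (hX' : X' = Z' - vecMulVec r' c') :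
    c' = c ∧ X'ᵀ * (diagonal r')⁻¹ * X' = Xᵀ * (diagonal r)⁻¹ * X := by
  have hrne : ∀ i, r i ≠ 0 := fun i => (hrpos i).ne'
  have hr1 : r i₁ = lam * r i₀ := by
    rw [hr, hr, Finset.mul_sum]
    exact Finset.sum_congr rfl fun j _ => hprop j
  have hmem : i₀ ∈ Finset.univ.erase i₁ := Finset.mem_erase.2 ⟨hne, Finset.mem_univ _⟩
  have hsub : ∀ (g : Fin I → ℝ),
      (∑ i : {i : Fin I // i ≠ i₁}, g i) = ∑ i ∈ Finset.univ.erase i₁, g i := by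
    intro g
    exact (Finset.sum_subtype (Finset.univ.erase i₁) (by simp) g).symm
  -- a generic merging lemma for sums
  have hmerge : ∀ (f : Fin I → ℝ),
      (∑ i ∈ Finset.univ.erase i₁, (if i = i₀ then f i₀ + f i₁ else f i)) = ∑ i, f i := by
    intro f
    have h1 : ∀ i ∈ Finset.univ.erase i₁,
        (if i = i₀ then f i₀ + f i₁ else f i) = f i + (if i = i₀ then f i₁ else 0) := by
      intro i _
      by_cases h : i = i₀ <;> simp [h]
    rw [Finset.sum_congr rfl h1, Finset.sum_add_distrib, Finset.sum_ite_eq' _ i₀ (fun _ => f i₁)]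
    simp only [hmem, if_true]
    exact Finset.sum_erase_add _ _ (Finset.mem_univ i₁)
  have hcc : c' = c := by
    funext j
    rw [hc' j]
    simp only [hZ']
    rw [hsub (fun i => if i = i₀ then Z i₀ j + Z i₁ j else Z i j), hmerge (fun i => Z i j),
      hc]
  have hr'v : ∀ (i : {i : Fin I // i ≠ i₁}),
      r' i = if (i : Fin I) = i₀ then r i₀ + r i₁ else r (i : Fin I) := by
    intro i
    rw [hr' i]
    simp only [hZ']
    split <;> simp [hr, Finset.sum_add_distrib]
  have hr'ne : ∀ i, r' i ≠ 0 := by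
    intro i
    rw [hr'v i]
    split
    · exact (add_pos (hrpos i₀) (hrpos i₁)).ne'
    · exact hrne _
  have hinv : ∀ {n : Type} [Fintype n] [DecidableEq n] (v : n → ℝ), (∀ i, v i ≠ 0) →
      (diagonal v)⁻¹ = diagonal (fun i => (v i)⁻¹) := by
    intro n _ _ v hv
    apply Matrix.inv_eq_right_inv
    rw [diagonal_mul_diagonal]
    convert Matrix.diagonal_one
    exact mul_inv_cancel₀ (hv _)
  refine ⟨hcc, ?_⟩
  have key : ∀ {n : Type} [Fintype n] [DecidableEq n] (A : Matrix n (Fin J) ℝ) (w : n → ℝ)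
      (j k : Fin J), (Aᵀ * diagonal w * A) j k = ∑ i, A i j * w i * A i k := by
    intro n _ _ A w j k
    rw [Matrix.mul_apply]
    simp only [Matrix.mul_diagonal, Matrix.transpose_apply]
  rw [hinv r' hr'ne, hinv r hrne]
  ext j k
  rw [key, key]
  have hXe : ∀ i j, X i j = Z i j - r i * c j := by
    intro i j; rw [hX]; simp [Matrix.vecMulVec_apply]
  have hX'e : ∀ i j, X' i j = Z' i j - r' i * c j := by
    intro i j; rw [hX', hcc]; simp [Matrix.vecMulVec_apply]
  have hterm : ∀ i : {i : Fin I // i ≠ i₁},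
      X' i j * (r' i)⁻¹ * X' i k
        = (fun t => if t = i₀ then
            (X i₀ j * (r i₀)⁻¹ * X i₀ k) + (X i₁ j * (r i₁)⁻¹ * X i₁ k)
          else X t j * (r t)⁻¹ * X t k) (i : Fin I) := by
    intro i
    simp only [hX'e, hXe, hZ' i, hr'v i]
    by_cases h : (i : Fin I) = i₀
    · simp only [h, if_true]
      rw [hprop j, hprop k, hr1]
      have h0 : r i₀ ≠ 0 := hrne i₀
      have h1 : lam ≠ 0 := hlam.ne'
      have h2 : (1 : ℝ) + lam ≠ 0 := by positivity
      have h3 : r i₀ + lam * r i₀ = (1 + lam) * r i₀ := by ring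
      rw [h3, mul_inv, mul_inv]
      field_simp
    · simp [h]
  rw [Finset.sum_congr rfl (fun i _ => hterm i),
    hsub (fun t => if t = i₀ then
      (X i₀ j * (r i₀)⁻¹ * X i₀ k) + (X i₁ j * (r i₁)⁻¹ * X i₁ k)
    else X t j * (r t)⁻¹ * X t k),
    hmerge (fun t => X t j * (r t)⁻¹ * X t k)]
end

section
/- MCA per-variable barycentric property: Let A = [A₁ | … | A_K] be a real I×J matrix concatenating K disjunctive indicator blocks (each A_k a 0/1 matrix with every row summing to 1). Set Z = A/(I·K), r = Z1, c = Zᵀ1, assume r and c have all entries positive, and let D_r = diag(r), D_c = diag(c), X = Z − r cᵀ. Suppose X = U Δ Vᵀ with Δ diagonal and invertible and Uᵀ D_r^{-1} U = Vᵀ D_c^{-1} V = I, and let G = D_c^{-1} V Δ be the column factor scores. Then for every block k and every component ℓ, Σ_{j in block k} c_j · G_{jℓ} = 0; i.e., the c-weighted barycenter of the factor scores of the levels of each variable is zero on every component. -/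
open Matrix

/-- MCA per-variable barycentric property: the `c`-weighted barycenter
of the column factor scores of the levels of each variable (block) is zero on every
component: `Σ_{j ∈ block k} c_j G_{jℓ} = 0`. -/
theorem mca_per_variable_barycenter {I J K L : ℕ}
    (A : Matrix (Fin I) (Fin J) ℝ)
    (b : Fin J → Fin K)
    (h01 : ∀ i j, A i j = 0 ∨ A i j = 1)
    (hblock : ∀ (i : Fin I) (k : Fin K),
      ∑ j ∈ Finset.univ.filter (fun j => b j = k), A i j = 1)
    (Z : Matrix (Fin I) (Fin J) ℝ) (hZ : Z = (1 / (I * K : ℝ)) • A)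
    (r : Fin I → ℝ) (c : Fin J → ℝ)
    (hr : ∀ i, r i = ∑ j, Z i j) (hc : ∀ j, c j = ∑ i, Z i j)
    (hrpos : ∀ i, 0 < r i) (hcpos : ∀ j, 0 < c j)
    (X : Matrix (Fin I) (Fin J) ℝ) (hX : X = Z - vecMulVec r c)
    (U : Matrix (Fin I) (Fin L) ℝ) (V : Matrix (Fin J) (Fin L) ℝ)
    (Δ : Matrix (Fin L) (Fin L) ℝ) (hΔ : Δ.IsDiag) (hΔinv : IsUnit Δ.det)
    (hXd : X = U * Δ * Vᵀ)
    (hU : Uᵀ * (diagonal r)⁻¹ * U = 1) (hV : Vᵀ * (diagonal c)⁻¹ * V = 1)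
    (G : Matrix (Fin J) (Fin L) ℝ) (hG : G = (diagonal c)⁻¹ * V * Δ) :
    ∀ (k : Fin K) (ℓ : Fin L),
      ∑ j ∈ Finset.univ.filter (fun j => b j = k), c j * G j ℓ = 0 := by
  intro k ℓ
  have hK : (0:ℝ) < K := by exact_mod_cast k.pos
  -- Δ is symmetric
  have hΔT : Δᵀ = Δ := by
    ext i j
    by_cases h : i = j
    · subst h; rfl
    · rw [transpose_apply, hΔ (Ne.symm h), hΔ h]
  -- V * Δ = Xᵀ * (diagonal r)⁻¹ * U
  have hDc : (diagonal c)⁻¹ = diagonal (fun j => (c j)⁻¹) := by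
    apply inv_eq_right_inv
    rw [diagonal_mul_diagonal]
    convert diagonal_one using 2
    ext j
    exact mul_inv_cancel₀ (hcpos j).ne'
  have hVΔ : V * Δ = Xᵀ * ((diagonal r)⁻¹ * U) := by
    rw [hXd, transpose_mul, transpose_mul, transpose_transpose]
    calc V * Δ = V * Δᵀ * (Uᵀ * (diagonal r)⁻¹ * U) := by
          rw [hU, hΔT, Matrix.mul_one]
    _ = _ := by simp only [Matrix.mul_assoc]
  -- c j * G j ℓ = (V * Δ) j ℓ
  have hcG : ∀ j, c j * G j ℓ = (V * Δ) j ℓ := by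
    intro j
    have hcj := (hcpos j).ne'
    rw [hG, hDc, Matrix.mul_assoc, diagonal_mul]
    field_simp
  -- key: block sums of X rows vanish
  have hXblock : ∀ i : Fin I, ∑ j ∈ Finset.univ.filter (fun j => b j = k), X i j = 0 := by
    intro i
    have hI : (0:ℝ) < I := by exact_mod_cast i.pos
    set N : ℝ := (I * K : ℝ) with hN
    have hN0 : N ≠ 0 := by positivity
    have hZblock : ∀ i' : Fin I, ∀ k' : Fin K,
        ∑ j ∈ Finset.univ.filter (fun j => b j = k'), Z i' j = 1 / N := by
      intro i' k'
      simp only [hZ, Matrix.smul_apply, smul_eq_mul, ← Finset.mul_sum, hblock i' k', mul_one, hN]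
    have hri : r i = K / N := by
      have h1 : ∑ k' : Fin K, ∑ j ∈ Finset.univ.filter (fun j => b j = k'), Z i j
          = ∑ j, Z i j := by
        rw [Finset.sum_fiberwise_eq_sum_filter]
        simp
      rw [hr i, ← h1]
      simp [hZblock, div_eq_mul_inv]
    have hcblock : ∑ j ∈ Finset.univ.filter (fun j => b j = k), c j = I / N := by
      simp only [hc]
      rw [Finset.sum_comm]
      simp [hZblock, div_eq_mul_inv]
    have : ∑ j ∈ Finset.univ.filter (fun j => b j = k), X i j
        = 1 / N - r i * (∑ j ∈ Finset.univ.filter (fun j => b j = k), c j) := by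
      simp only [hX, Matrix.sub_apply, vecMulVec_apply, Finset.sum_sub_distrib, hZblock i k,
        ← Finset.mul_sum]
    rw [this, hri, hcblock, hN]
    field_simp
    ring
  -- put it together
  calc ∑ j ∈ Finset.univ.filter (fun j => b j = k), c j * G j ℓ
      = ∑ j ∈ Finset.univ.filter (fun j => b j = k), (V * Δ) j ℓ := by
        exact Finset.sum_congr rfl fun j _ => hcG j
    _ = ∑ j ∈ Finset.univ.filter (fun j => b j = k),
          ∑ i, X i j * ((diagonal r)⁻¹ * U) i ℓ := by
        rw [hVΔ]
        exact Finset.sum_congr rfl fun j _ => by rw [mul_apply]; simp [transpose_apply]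
    _ = ∑ i, (∑ j ∈ Finset.univ.filter (fun j => b j = k), X i j)
          * ((diagonal r)⁻¹ * U) i ℓ := by
        rw [Finset.sum_comm]
        simp [Finset.sum_mul]
    _ = 0 := by simp [hXblock]
end

section
/- Weighted Eckart–Young optimality of correspondence analysis: Let X be a real I×J matrix and let D_r, D_c be diagonal matrices with positive diagonal entries. Suppose X = U Δ Vᵀ with Uᵀ D_r^{-1} U = Vᵀ D_c^{-1} V = I and Δ diagonal with diagonal entries δ₁ ≥ δ₂ ≥ … ≥ δ_R > 0 arranged in decreasing order, and for L ≤ R let X_L = Σ_{ℓ=1}^L δ_ℓ u_ℓ v_ℓᵀ be the rank-L truncation (u_ℓ, v_ℓ the ℓ-th columns of U, V). Then X_L minimizes the weighted squared error Σ_{i,j} (x_{ij} − y_{ij})² / (r_i c_j) over all real I×J matrices Y of rank at most L, where r_i and c_j are the diagonal entries of D_r and D_c; i.e., the GSVD truncation gives the optimal rank-L approximation of X in the chi-square metric. -/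
open Matrix

lemma frob_eq {m n : Type*} [Fintype m] [Fintype n] (M : Matrix m n ℝ) :
    trace (Mᵀ * M) = ∑ i, ∑ j, (M i j)^2 := by
  rw [Matrix.trace, Finset.sum_comm]
  simp [Matrix.diag, Matrix.mul_apply, sq]

lemma frob_nonneg {m n : Type*} [Fintype m] [Fintype n] (M : Matrix m n ℝ) :
    0 ≤ trace (Mᵀ * M) := by
  rw [frob_eq]; positivity

lemma sandwich {a b r : Type*} [Fintype a] [Fintype b] [Fintype r] [DecidableEq r]
    (Ut : Matrix a r ℝ) (Vt : Matrix b r ℝ) (M : Matrix r r ℝ)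
    (hU : Utᵀ * Ut = 1) (hV : Vtᵀ * Vt = 1) :
    trace ((Ut * M * Vtᵀ)ᵀ * (Ut * M * Vtᵀ)) = trace (Mᵀ * M) := by
  have h : (Ut * M * Vtᵀ)ᵀ * (Ut * M * Vtᵀ) = Vt * (Mᵀ * M) * Vtᵀ := by
    simp only [Matrix.transpose_mul, Matrix.transpose_transpose, Matrix.mul_assoc]
    rw [← Matrix.mul_assoc Utᵀ Ut, hU, Matrix.one_mul]
  rw [h, Matrix.trace_mul_cycle, ← Matrix.mul_assoc, hV, Matrix.one_mul]

open Matrix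


lemma compress {a b r : Type*} [Fintype a] [Fintype b] [Fintype r]
    [DecidableEq a] [DecidableEq b] [DecidableEq r]
    (Ut : Matrix a r ℝ) (Vt : Matrix b r ℝ) (M : Matrix a b ℝ)
    (hU : Utᵀ * Ut = 1) (hV : Vtᵀ * Vt = 1) :
    trace ((Utᵀ * M * Vt)ᵀ * (Utᵀ * M * Vt)) ≤ trace (Mᵀ * M) := by
  set P : Matrix a a ℝ := Ut * Utᵀ with hPdef
  set Q : Matrix b b ℝ := Vt * Vtᵀ with hQdef
  have hPP : P * P = P := by
    rw [hPdef, Matrix.mul_assoc, ← Matrix.mul_assoc Utᵀ, hU, Matrix.one_mul]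
  have hQQ : Q * Q = Q := by
    rw [hQdef, Matrix.mul_assoc, ← Matrix.mul_assoc Vtᵀ, hV, Matrix.one_mul]
  have hPt : Pᵀ = P := by rw [hPdef, Matrix.transpose_mul, Matrix.transpose_transpose]
  have hQt : Qᵀ = Q := by rw [hQdef, Matrix.transpose_mul, Matrix.transpose_transpose]
  have e3 : trace ((Utᵀ * M * Vt)ᵀ * (Utᵀ * M * Vt)) = trace (Mᵀ * (P * M) * Q) := by
    have : (Utᵀ * M * Vt)ᵀ * (Utᵀ * M * Vt) = Vtᵀ * (Mᵀ * (P * M)) * Vt := by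
      simp only [Matrix.transpose_mul, Matrix.transpose_transpose, hPdef, Matrix.mul_assoc]
    rw [this, Matrix.trace_mul_cycle, Matrix.trace_mul_comm, ← hQdef]
  have e1 : trace (((1 - P) * M)ᵀ * ((1 - P) * M)) = trace (Mᵀ * M) - trace (Mᵀ * (P * M)) := by
    have h1 : (1 - P)ᵀ = 1 - P := by rw [Matrix.transpose_sub, Matrix.transpose_one, hPt]
    have h2 : (1 - P) * (1 - P) = 1 - P := by
      simp [Matrix.sub_mul, Matrix.mul_sub, hPP]
    have : ((1 - P) * M)ᵀ * ((1 - P) * M) = Mᵀ * M - Mᵀ * (P * M) := by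
      rw [Matrix.transpose_mul, h1, Matrix.mul_assoc, ← Matrix.mul_assoc (1-P), h2]
      simp [Matrix.sub_mul, Matrix.mul_sub, Matrix.mul_assoc]
    rw [this, Matrix.trace_sub]
  have e2 : trace ((P * M * (1 - Q))ᵀ * (P * M * (1 - Q)))
      = trace (Mᵀ * (P * M)) - trace (Mᵀ * (P * M) * Q) := by
    have h1 : (1 - Q)ᵀ = 1 - Q := by rw [Matrix.transpose_sub, Matrix.transpose_one, hQt]
    have h2 : (1 - Q) * (1 - Q) = 1 - Q := by
      simp [Matrix.sub_mul, Matrix.mul_sub, hQQ]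
    have : (P * M * (1 - Q))ᵀ * (P * M * (1 - Q)) = (1 - Q) * (Mᵀ * (P * M)) * (1 - Q) := by
      simp only [Matrix.transpose_mul, hPt, hQt, h1, Matrix.mul_assoc, ← Matrix.mul_assoc P P, hPP]
    rw [this, Matrix.trace_mul_cycle, h2, Matrix.sub_mul, Matrix.one_mul, Matrix.trace_sub,
      Matrix.trace_mul_comm, Matrix.trace_mul_comm Q]
  have n1 := frob_nonneg ((1 - P) * M)
  have n2 := frob_nonneg (P * M * (1 - Q))
  linarith [e1, e2, e3, n1, n2]


lemma majorize {R L : ℕ} (hL : L ≤ R) (a t : Fin R → ℝ)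
    (ha0 : ∀ k, 0 ≤ a k) (haanti : ∀ k l : Fin R, k ≤ l → a l ≤ a k)
    (ht0 : ∀ k, 0 ≤ t k) (ht1 : ∀ k, t k ≤ 1)
    (htsum : (R : ℝ) - L ≤ ∑ k, t k) :
    ∑ k ∈ Finset.univ.filter (fun k : Fin R => ¬ (k : ℕ) < L), a k ≤ ∑ k, a k * t k := by
  rcases eq_or_lt_of_le hL with hRL | hLR
  · have h1 : Finset.univ.filter (fun k : Fin R => ¬ (k : ℕ) < L) = ∅ := by
      ext k
      have := k.isLt
      simp only [Finset.mem_filter, Finset.mem_univ, true_and, Finset.notMem_empty,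
        iff_false, not_not]
      omega
    rw [h1, Finset.sum_empty]
    exact Finset.sum_nonneg fun k _ => mul_nonneg (ha0 k) (ht0 k)
  · set kL : Fin R := ⟨L, hLR⟩ with hkL
    set S1 := Finset.univ.filter (fun k : Fin R => (k : ℕ) < L) with hS1
    set S2 := Finset.univ.filter (fun k : Fin R => ¬ (k : ℕ) < L) with hS2
    have hcard1 : S1.card = L := by
      have e : {k : Fin R // (k : ℕ) < L} ≃ Fin L :=
        { toFun := fun k => ⟨k.1.1, k.2⟩
          invFun := fun i => ⟨⟨i.1, lt_of_lt_of_le i.2 hL⟩, i.2⟩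
          left_inv := fun k => Subtype.ext (Fin.ext rfl)
          right_inv := fun i => rfl }
      rw [hS1, ← Fintype.card_subtype, Fintype.card_congr e, Fintype.card_fin]
    have hcardsum : S1.card + S2.card = R := by
      rw [hS1, hS2, Finset.card_filter_add_card_filter_not, Finset.card_univ,
        Fintype.card_fin]
    have hcard2 : (S2.card : ℝ) = (R : ℝ) - L := by
      have : L + S2.card = R := by rw [← hcard1]; exact hcardsum
      push_cast [← this]; ring
    have hsplitT : ∑ k ∈ S1, t k + ∑ k ∈ S2, t k = ∑ k, t k :=
      Finset.sum_filter_add_sum_filter_not _ _ t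
    have hsplitAT : ∑ k ∈ S1, a k * t k + ∑ k ∈ S2, a k * t k = ∑ k, a k * t k :=
      Finset.sum_filter_add_sum_filter_not _ _ _
    have h1 : ∀ k ∈ S1, a kL ≤ a k := by
      intro k hk
      rw [hS1, Finset.mem_filter] at hk
      exact haanti k kL (by simpa [hkL, Fin.le_def] using hk.2.le)
    have h2 : ∀ k ∈ S2, a k ≤ a kL := by
      intro k hk
      rw [hS2, Finset.mem_filter] at hk
      exact haanti kL k (by simpa [hkL, Fin.le_def] using Nat.le_of_not_lt hk.2)
    have e1 : a kL * ∑ k ∈ S1, t k ≤ ∑ k ∈ S1, a k * t k := by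
      rw [Finset.mul_sum]
      exact Finset.sum_le_sum fun k hk => mul_le_mul_of_nonneg_right (h1 k hk) (ht0 k)
    have e2 : ∑ k ∈ S2, a k * (1 - t k) ≤ ∑ k ∈ S2, a kL * (1 - t k) :=
      Finset.sum_le_sum fun k hk =>
        mul_le_mul_of_nonneg_right (h2 k hk) (by linarith [ht1 k])
    have e2' : ∑ k ∈ S2, a kL * (1 - t k) = a kL * ((S2.card : ℝ) - ∑ k ∈ S2, t k) := by
      rw [← Finset.mul_sum, Finset.sum_sub_distrib, Finset.sum_const, nsmul_eq_mul, mul_one]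
    have expand : ∑ k ∈ S2, a k * (1 - t k) = ∑ k ∈ S2, a k - ∑ k ∈ S2, a k * t k := by
      simp [mul_sub, Finset.sum_sub_distrib]
    have hA : (S2.card : ℝ) - ∑ k ∈ S2, t k ≤ ∑ k ∈ S1, t k := by
      rw [hcard2]; linarith
    have e3 : a kL * ((S2.card : ℝ) - ∑ k ∈ S2, t k) ≤ a kL * ∑ k ∈ S1, t k :=
      mul_le_mul_of_nonneg_left hA (ha0 kL)
    linarith
open Matrix Finset

local notation "⟪" x ", " y "⟫" => @inner ℝ _ _ x y

lemma euc_norm_sq {n : ℕ} (x : EuclideanSpace ℝ (Fin n)) : ‖x‖^2 = ∑ i, (x i)^2 := by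
  rw [← real_inner_self_eq_norm_sq, PiLp.inner_apply]
  simp [sq]

set_option maxHeartbeats 1000000 in
lemma core {R L : ℕ} (hL : L ≤ R) (δ : Fin R → ℝ) (hδpos : ∀ ℓ, 0 < δ ℓ)
    (hδanti : ∀ k l : Fin R, k ≤ l → δ l ≤ δ k)
    (B : Matrix (Fin R) (Fin R) ℝ) (hB : B.rank ≤ L) :
    ∑ ℓ ∈ Finset.univ.filter (fun ℓ : Fin R => ¬ (ℓ : ℕ) < L), (δ ℓ)^2
      ≤ ∑ k, ∑ i, ((Matrix.diagonal δ - B) i k)^2 := by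
  classical
  set φ : (Fin R → ℝ) ≃ₗ[ℝ] EuclideanSpace ℝ (Fin R) :=
    (WithLp.linearEquiv 2 ℝ (Fin R → ℝ)).symm with hφ
  set W : Submodule ℝ (EuclideanSpace ℝ (Fin R)) :=
    (LinearMap.range B.mulVecLin).map (φ : (Fin R → ℝ) →ₗ[ℝ] EuclideanSpace ℝ (Fin R)) with hW
  have hWrank : Module.finrank ℝ W ≤ L := by
    rw [hW, LinearEquiv.finrank_map_eq]
    exact hB
  set b : Fin R → EuclideanSpace ℝ (Fin R) := fun k => φ (Bᵀ k) with hb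
  have hbW : ∀ k, b k ∈ W := by
    intro k
    exact Submodule.mem_map_of_mem ⟨Pi.single k 1, by
      rw [Matrix.mulVecLin_apply, Matrix.mulVec_single_one]; rfl⟩
  set u : Fin R → EuclideanSpace ℝ (Fin R) := fun k => EuclideanSpace.single k (δ k) with hu
  have hcol : ∀ k, ∑ i, ((Matrix.diagonal δ - B) i k)^2 = ‖u k - b k‖^2 := by
    intro k
    rw [euc_norm_sq]
    apply Finset.sum_congr rfl
    intro i _
    have h1 : (u k - b k) i = u k i - b k i := rfl
    have h2 : b k i = B i k := rfl
    rw [h1, h2, hu]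
    simp only [EuclideanSpace.single_apply, Matrix.sub_apply, Matrix.diagonal_apply]
    by_cases h : i = k <;> simp [h]
  -- projection facts
  set e1 : Fin R → EuclideanSpace ℝ (Fin R) := fun k => EuclideanSpace.single k (1:ℝ) with he1
  set s : Fin R → ℝ := fun k => ‖Submodule.orthogonalProjectionOnto W (e1 k)‖^2 with hs
  have husmul : ∀ k, u k = δ k • e1 k := by
    intro k
    apply PiLp.ext
    intro i
    simp [hu, he1, EuclideanSpace.single_apply]
  have key : ∀ k, (δ k)^2 * (1 - s k) ≤ ‖u k - b k‖^2 := by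
    intro k
    have h1 := Submodule.norm_sq_eq_add_norm_sq_projection (u k - b k) W
    have h2 : Submodule.orthogonalProjectionOnto Wᗮ (u k - b k) = Submodule.orthogonalProjectionOnto Wᗮ (u k) := by
      rw [map_sub, Submodule.orthogonalProjectionOnto_orthogonal_apply_eq_zero (hbW k),
        sub_zero]
    have h3 := Submodule.norm_sq_eq_add_norm_sq_projection (u k) W
    have h4 : ‖u k‖^2 = (δ k)^2 := by
      rw [hu]
      simp only [EuclideanSpace.norm_single, Real.norm_eq_abs, sq_abs]
    have hproj : Submodule.orthogonalProjectionOnto W (u k) = δ k • Submodule.orthogonalProjectionOnto W (e1 k) := by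
      rw [husmul k]
      exact _root_.map_smul _ _ _
    have h5 : ‖Submodule.orthogonalProjectionOnto W (u k)‖^2 = (δ k)^2 * s k := by
      rw [hproj, norm_smul, mul_pow, Real.norm_eq_abs, sq_abs]
    have h6 : (0:ℝ) ≤ ‖Submodule.orthogonalProjectionOnto W (u k - b k)‖^2 := sq_nonneg _
    have h2' : ‖Submodule.orthogonalProjectionOnto Wᗮ (u k - b k)‖^2
        = ‖Submodule.orthogonalProjectionOnto Wᗮ (u k)‖^2 := by rw [h2]
    nlinarith [h1, h3, h2']
  have hs0 : ∀ k, 0 ≤ s k := fun k => sq_nonneg _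
  have hs1 : ∀ k, s k ≤ 1 := by
    intro k
    have h3 := Submodule.norm_sq_eq_add_norm_sq_projection (e1 k) W
    have h4 : ‖e1 k‖^2 = 1 := by
      rw [he1]
      simp
    have h6 : (0:ℝ) ≤ ‖Submodule.orthogonalProjectionOnto Wᗮ (e1 k)‖^2 := sq_nonneg _
    show ‖Submodule.orthogonalProjectionOnto W (e1 k)‖^2 ≤ 1
    linarith
  -- Parseval: sum of s is at most L
  have hssum : ∑ k, s k ≤ (L : ℝ) := by
    set d := Module.finrank ℝ W with hd
    set onb := stdOrthonormalBasis ℝ W with honb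
    have hrep : ∀ k, s k = ∑ m : Fin d, (⟪(onb m : EuclideanSpace ℝ (Fin R)), e1 k⟫)^2 := by
      intro k
      show ‖Submodule.orthogonalProjectionOnto W (e1 k)‖^2 = _
      rw [← onb.repr.norm_map (Submodule.orthogonalProjectionOnto W (e1 k)), euc_norm_sq]
      apply Finset.sum_congr rfl
      intro m _
      rw [onb.repr_apply_apply, Submodule.inner_orthogonalProjectionOnto_eq_of_mem_left]
    have hcol2 : ∀ m : Fin d, ∑ k, (⟪(onb m : EuclideanSpace ℝ (Fin R)), e1 k⟫)^2 = 1 := by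
      intro m
      have hx : ∀ k, ⟪(onb m : EuclideanSpace ℝ (Fin R)), e1 k⟫
          = (onb m : EuclideanSpace ℝ (Fin R)) k := by
        intro k
        rw [he1]
        simp [EuclideanSpace.inner_single_right]
      calc ∑ k, (⟪(onb m : EuclideanSpace ℝ (Fin R)), e1 k⟫)^2
          = ∑ k, ((onb m : EuclideanSpace ℝ (Fin R)) k)^2 := by
            exact Finset.sum_congr rfl fun k _ => by rw [hx]
        _ = ‖(onb m : EuclideanSpace ℝ (Fin R))‖^2 := (euc_norm_sq _).symm
        _ = 1 := by
            have := onb.orthonormal.1 m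
            rw [Submodule.norm_coe, this, one_pow]
    calc ∑ k, s k = ∑ k, ∑ m : Fin d, (⟪(onb m : EuclideanSpace ℝ (Fin R)), e1 k⟫)^2 :=
          Finset.sum_congr rfl fun k _ => hrep k
      _ = ∑ m : Fin d, ∑ k, (⟪(onb m : EuclideanSpace ℝ (Fin R)), e1 k⟫)^2 := Finset.sum_comm
      _ = ∑ _m : Fin d, (1:ℝ) := Finset.sum_congr rfl fun m _ => hcol2 m
      _ = (d : ℝ) := by simp
      _ ≤ (L : ℝ) := by exact_mod_cast hWrank
  -- apply majorization
  have hmaj := majorize hL (fun k => (δ k)^2) (fun k => 1 - s k)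
    (fun k => sq_nonneg _)
    (fun k l hkl => by
      nlinarith [hδpos l, hδanti k l hkl])
    (fun k => by linarith [hs1 k])
    (fun k => by linarith [hs0 k])
    (by
      rw [Finset.sum_sub_distrib, Finset.sum_const, Finset.card_univ, Fintype.card_fin,
        nsmul_eq_mul, mul_one]
      linarith)
  calc ∑ ℓ ∈ Finset.univ.filter (fun ℓ : Fin R => ¬ (ℓ : ℕ) < L), (δ ℓ)^2
      ≤ ∑ k, (δ k)^2 * (1 - s k) := hmaj
    _ ≤ ∑ k, ‖u k - b k‖^2 := Finset.sum_le_sum fun k _ => key k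
    _ = ∑ k, ∑ i, ((Matrix.diagonal δ - B) i k)^2 :=
        (Finset.sum_congr rfl fun k _ => (hcol k).symm)

open Matrix

lemma rank_triple_le {a b p q : ℕ} (A : Matrix (Fin a) (Fin p) ℝ)
    (Z : Matrix (Fin p) (Fin q) ℝ) (C : Matrix (Fin q) (Fin b) ℝ) :
    (A * Z * C).rank ≤ Z.rank :=
  (Matrix.rank_mul_le_left (A * Z) C).trans (Matrix.rank_mul_le_right A Z)

/-- weighted Eckart–Young optimality of correspondence analysis: the
rank-`L` truncation `X_L = Σ_{ℓ<L} δ_ℓ u_ℓ v_ℓᵀ` of the GSVD `X = U Δ Vᵀ` (with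
decreasing positive singular values) minimizes the weighted squared error
`Σ_{ij} (x_{ij} - y_{ij})²/(r_i c_j)` among all matrices `Y` of rank at most `L`. -/
theorem weighted_eckart_young {I J R : ℕ}
    (X : Matrix (Fin I) (Fin J) ℝ)
    (r : Fin I → ℝ) (c : Fin J → ℝ)
    (hrpos : ∀ i, 0 < r i) (hcpos : ∀ j, 0 < c j)
    (U : Matrix (Fin I) (Fin R) ℝ) (V : Matrix (Fin J) (Fin R) ℝ)
    (δ : Fin R → ℝ)
    (hδpos : ∀ ℓ, 0 < δ ℓ)
    (hδanti : ∀ k l : Fin R, k ≤ l → δ l ≤ δ k)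
    (hX : X = U * diagonal δ * Vᵀ)
    (hU : Uᵀ * (diagonal r)⁻¹ * U = 1) (hV : Vᵀ * (diagonal c)⁻¹ * V = 1)
    (L : ℕ) (hL : L ≤ R)
    (XL : Matrix (Fin I) (Fin J) ℝ)
    (hXL : ∀ i j, XL i j =
      ∑ ℓ ∈ Finset.univ.filter (fun ℓ : Fin R => (ℓ : ℕ) < L), δ ℓ * U i ℓ * V j ℓ) :
    XL.rank ≤ L ∧
    ∀ Y : Matrix (Fin I) (Fin J) ℝ, Y.rank ≤ L →
      ∑ i, ∑ j, (X i j - XL i j) ^ 2 / (r i * c j)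
        ≤ ∑ i, ∑ j, (X i j - Y i j) ^ 2 / (r i * c j) := by
  classical
  have hrne : ∀ i, r i ≠ 0 := fun i => (hrpos i).ne'
  have hcne : ∀ j, c j ≠ 0 := fun j => (hcpos j).ne'
  set e : Fin I → ℝ := fun i => (Real.sqrt (r i))⁻¹ with he
  set f : Fin J → ℝ := fun j => (Real.sqrt (c j))⁻¹ with hf
  have he2 : ∀ i, e i * e i = (r i)⁻¹ := fun i => by
    rw [he]; dsimp only; rw [← mul_inv, Real.mul_self_sqrt (hrpos i).le]
  have hf2 : ∀ j, f j * f j = (c j)⁻¹ := fun j => by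
    rw [hf]; dsimp only; rw [← mul_inv, Real.mul_self_sqrt (hcpos j).le]
  have hrinv : (diagonal r)⁻¹ = diagonal (fun i => (r i)⁻¹) := by
    apply Matrix.inv_eq_right_inv
    rw [diagonal_mul_diagonal,
      show (fun i => r i * (r i)⁻¹) = fun _ => (1:ℝ) from funext fun i => mul_inv_cancel₀ (hrne i),
      diagonal_one]
  have hcinv : (diagonal c)⁻¹ = diagonal (fun j => (c j)⁻¹) := by
    apply Matrix.inv_eq_right_inv
    rw [diagonal_mul_diagonal,
      show (fun j => c j * (c j)⁻¹) = fun _ => (1:ℝ) from funext fun j => mul_inv_cancel₀ (hcne j),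
      diagonal_one]
  set Ut := diagonal e * U with hUtdef
  set Vt := diagonal f * V with hVtdef
  have hUt : Utᵀ * Ut = 1 := by
    rw [hUtdef, transpose_mul, diagonal_transpose, Matrix.mul_assoc,
      ← Matrix.mul_assoc (diagonal e), diagonal_mul_diagonal,
      show (fun i => e i * e i) = fun i => (r i)⁻¹ from funext he2, ← hrinv,
      ← Matrix.mul_assoc]
    exact hU
  have hVt : Vtᵀ * Vt = 1 := by
    rw [hVtdef, transpose_mul, diagonal_transpose, Matrix.mul_assoc,
      ← Matrix.mul_assoc (diagonal f), diagonal_mul_diagonal,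
      show (fun j => f j * f j) = fun j => (c j)⁻¹ from funext hf2, ← hcinv,
      ← Matrix.mul_assoc]
    exact hV
  have hwe : ∀ Z : Matrix (Fin I) (Fin J) ℝ,
      ∑ i, ∑ j, (Z i j)^2 / (r i * c j)
        = trace ((diagonal e * Z * diagonal f)ᵀ * (diagonal e * Z * diagonal f)) := by
    intro Z
    rw [frob_eq]
    refine Finset.sum_congr rfl fun i _ => Finset.sum_congr rfl fun j _ => ?_
    have h1 : (diagonal e * Z * diagonal f) i j = e i * Z i j * f j := by
      rw [Matrix.mul_diagonal, Matrix.diagonal_mul]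
    rw [h1, div_eq_mul_inv, mul_inv, ← he2 i, ← hf2 j]
    ring
  set δH : Fin R → ℝ := fun ℓ => if (ℓ:ℕ) < L then δ ℓ else 0 with hδH
  set δT : Fin R → ℝ := fun ℓ => if (ℓ:ℕ) < L then 0 else δ ℓ with hδT
  have hXLmat : XL = U * diagonal δH * Vᵀ := by
    ext i j
    rw [hXL i j, Finset.sum_filter]
    have h2 : (U * diagonal δH * Vᵀ) i j = ∑ ℓ, U i ℓ * δH ℓ * V j ℓ := by
      rw [Matrix.mul_apply]
      refine Finset.sum_congr rfl fun ℓ _ => ?_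
      rw [Matrix.mul_diagonal, Matrix.transpose_apply]
    rw [h2]
    refine Finset.sum_congr rfl fun ℓ _ => ?_
    by_cases h : (ℓ:ℕ) < L
    · simp only [hδH, if_pos h]; ring
    · simp only [hδH, if_neg h, mul_zero, zero_mul]
  have hsub : X - XL = U * diagonal δT * Vᵀ := by
    rw [hX, hXLmat, ← Matrix.sub_mul, ← Matrix.mul_sub]
    have hdd : diagonal δ - diagonal δH = diagonal δT := by
      ext i k
      rcases eq_or_ne i k with hik | hik
      · subst hik
        by_cases h : (i:ℕ) < L <;>
          simp [Matrix.diagonal_apply, Matrix.sub_apply, hδH, hδT, h]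
      · simp [Matrix.diagonal_apply, Matrix.sub_apply, hδH, hδT, hik]
    rw [hdd]
  constructor
  · rw [hXLmat]
    refine le_trans (rank_triple_le U (diagonal δH) Vᵀ) ?_
    rw [Matrix.rank_diagonal]
    have hlt : ∀ x : {ℓ : Fin R // δH ℓ ≠ 0}, (x.1 : ℕ) < L := by
      intro x
      by_contra h
      exact x.2 (by simp [hδH, h])
    calc Fintype.card {ℓ : Fin R // δH ℓ ≠ 0}
        ≤ Fintype.card (Fin L) := Fintype.card_le_of_injective
          (fun x => (⟨x.1.1, hlt x⟩ : Fin L))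
          (fun a b hab => by
            apply Subtype.ext
            apply Fin.ext
            simpa using congrArg Fin.val hab)
      _ = L := Fintype.card_fin L
  · intro Y hY
    set M := diagonal e * (X - Y) * diagonal f with hM
    set B := Utᵀ * (diagonal e * Y * diagonal f) * Vt with hB
    have hscaleX : diagonal e * X * diagonal f = Ut * diagonal δ * Vtᵀ := by
      rw [hX, hUtdef, hVtdef, transpose_mul, diagonal_transpose]
      simp only [Matrix.mul_assoc]
    have hMB : Utᵀ * M * Vt = diagonal δ - B := by
      have hMsplit : M = Ut * diagonal δ * Vtᵀ - diagonal e * Y * diagonal f := by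
        rw [hM, Matrix.mul_sub, Matrix.sub_mul, hscaleX]
      rw [hMsplit, Matrix.mul_sub, Matrix.sub_mul]
      congr 1
      simp only [Matrix.mul_assoc]
      rw [hVt, Matrix.mul_one, ← Matrix.mul_assoc, hUt, Matrix.one_mul]
    have hrankB : B.rank ≤ L := by
      rw [hB]
      exact le_trans (rank_triple_le _ _ _) (le_trans (rank_triple_le _ _ _) hY)
    have hcore := core hL δ hδpos hδanti B hrankB
    have hfrobDB : ∑ k, ∑ i, ((Matrix.diagonal δ - B) i k)^2
        = trace ((diagonal δ - B)ᵀ * (diagonal δ - B)) := by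
      rw [frob_eq]
      exact Finset.sum_comm
    have hcomp := compress Ut Vt M hUt hVt
    have hleft : ∑ i, ∑ j, (X i j - XL i j)^2 / (r i * c j)
        = ∑ ℓ ∈ Finset.univ.filter (fun ℓ : Fin R => ¬ (ℓ:ℕ) < L), (δ ℓ)^2 := by
      have h0 := hwe (X - XL)
      simp only [Matrix.sub_apply] at h0
      rw [h0]
      have hN : diagonal e * (X - XL) * diagonal f = Ut * diagonal δT * Vtᵀ := by
        rw [hsub, hUtdef, hVtdef, transpose_mul, diagonal_transpose]
        simp only [Matrix.mul_assoc]
      rw [hN, sandwich Ut Vt (diagonal δT) hUt hVt, diagonal_transpose,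
        diagonal_mul_diagonal, Matrix.trace_diagonal, Finset.sum_filter]
      refine Finset.sum_congr rfl fun ℓ _ => ?_
      by_cases h : (ℓ:ℕ) < L
      · simp [hδT, h]
      · simp [hδT, h, sq]
    have hright : ∑ i, ∑ j, (X i j - Y i j)^2 / (r i * c j) = trace (Mᵀ * M) := by
      have h0 := hwe (X - Y)
      simp only [Matrix.sub_apply] at h0
      rw [h0, hM]
    rw [hleft, hright]
    calc ∑ ℓ ∈ Finset.univ.filter (fun ℓ : Fin R => ¬ (ℓ:ℕ) < L), (δ ℓ)^2
        ≤ ∑ k, ∑ i, ((Matrix.diagonal δ - B) i k)^2 := hcore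
      _ = trace ((diagonal δ - B)ᵀ * (diagonal δ - B)) := hfrobDB
      _ = trace ((Utᵀ * M * Vt)ᵀ * (Utᵀ * M * Vt)) := by rw [hMB]
      _ ≤ trace (Mᵀ * M) := hcomp
end
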